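/- Let T be a finite TD-unmixed balanced tree of height 3, and let u be a vertex of height 2. Then V_odd(T∖N[u]) = V_odd(T)∖N_T(u), where heights on the left are computed in the induced subgraph T∖N[u] and on the right in T. -/

import Mathlib

open scoped Classical

section GraphDefs

variable {V : Type} (G : SimpleGraph V)

/-- A leaf is a vertex of degree 1. -/
def IsLeafVx (v : V) : Prop := (G.neighborSet v).ncard = 1

/-- The height of a vertex: the minimum distance to a leaf in its connected
component (`0` if there is no leaf reachable from it, e.g. for isolated vertices). -/
noncomputable def heightVx (v : V) : ℕ :=
  sInf {n | ∃ l, IsLeafVx G l ∧ G.Reachable v l ∧ G.dist v l = n}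

/-- The height of a graph: the maximum height of a vertex. -/
noncomputable def heightGr : ℕ := sSup (Set.range (heightVx G))

/-- A graph is balanced if no two adjacent vertices have the same height. -/
def IsBalanced : Prop := ∀ u w, G.Adj u w → heightVx G u ≠ heightVx G w

/-- The open neighborhood of a set of vertices. -/
def nbhd (S : Set V) : Set V := {u | ∃ v ∈ S, G.Adj v u}

/-- A total dominating set: `N(S) = V`. -/
def IsTDSet (S : Set V) : Prop := nbhd G S = Set.univ

/-- A minimal total dominating set. -/
def IsMinTDSet (S : Set V) : Prop := IsTDSet G S ∧ ∀ S' ⊂ S, ¬ IsTDSet G S'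

/-- A graph is TD-unmixed if all of its minimal total dominating sets have
the same cardinality. -/
def TDUnmixed : Prop :=
  ∀ S₁ S₂ : Set V, IsMinTDSet G S₁ → IsMinTDSet G S₂ → S₁.ncard = S₂.ncard

/-- A forest is TD-unmixed if every connected component is TD-unmixed. -/
def ComponentwiseTDUnmixed : Prop :=
  ∀ c : G.ConnectedComponent, TDUnmixed (G.induce c.supp)

end GraphDefs

/-!
In a balanced graph the heights of adjacent vertices differ by exactly one, so the parity of the
height is a proper 2-colouring, and it stays one on `T∖N[u]`. Since `u` is even, `N(u)` is odd,
so an odd vertex outside `N[u]` keeps all its (even) neighbours; not being a leaf of `T`, it is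
not a leaf of `T∖N[u]` either. Hence all leaves of `T∖N[u]` are even, and the height of a vertex
in `T∖N[u]`, the length of a shortest walk to a leaf, has the parity of its colour, as long as
some leaf is reachable. For an odd vertex it is: its component in the forest `T∖N[u]` is a finite
tree with an edge.
-/

open SimpleGraph

section Heights

variable {V : Type} {G : SimpleGraph V} {u v w l : V}

lemma isLeafVx_iff_degree_eq_one [Fintype (G.neighborSet v)] : IsLeafVx G v ↔ G.degree v = 1 := by
  rw [IsLeafVx, Set.ncard_eq_toFinset_card']
  rfl

lemma isLeafVx_induce_iff {s : Set V} {v : s} (hv : G.neighborSet v ⊆ s) :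
    IsLeafVx (G.induce s) v ↔ IsLeafVx G v := by
  rw [IsLeafVx, IsLeafVx, ← Set.ncard_image_of_injective _ Subtype.val_injective]
  congr! 2
  ext w
  constructor
  · rintro ⟨w, hw, rfl⟩
    simpa using hw
  · intro hw
    exact ⟨⟨w, hv hw⟩, by simpa using hw, rfl⟩

lemma heightVx_le_dist (hl : IsLeafVx G l) (hvl : G.Reachable v l) : heightVx G v ≤ G.dist v l :=
  Nat.sInf_le ⟨l, hl, hvl, rfl⟩

lemma IsLeafVx.heightVx_eq_zero (hl : IsLeafVx G l) : heightVx G l = 0 :=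
  Nat.eq_zero_of_le_zero ((heightVx_le_dist hl (Reachable.refl l)).trans_eq dist_self)

lemma exists_isLeafVx_dist_eq_heightVx (h : ∃ l, IsLeafVx G l ∧ G.Reachable v l) :
    ∃ l, IsLeafVx G l ∧ G.Reachable v l ∧ G.dist v l = heightVx G v := by
  obtain ⟨l, hl, hvl⟩ := h
  exact Nat.sInf_mem (s := {n | ∃ l, IsLeafVx G l ∧ G.Reachable v l ∧ G.dist v l = n})
    ⟨_, l, hl, hvl, rfl⟩

lemma heightVx_eq_zero_of_not_exists (h : ¬∃ l, IsLeafVx G l ∧ G.Reachable v l) :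
    heightVx G v = 0 :=
  Nat.sInf_eq_zero.mpr <| .inr <| Set.eq_empty_of_forall_notMem fun _ ⟨l, hl, hvl, _⟩ ↦
    h ⟨l, hl, hvl⟩

lemma heightVx_le_heightVx_add_one_of_adj (hvw : G.Adj v w) :
    heightVx G v ≤ heightVx G w + 1 := by
  by_cases h : ∃ l, IsLeafVx G l ∧ G.Reachable w l
  · obtain ⟨l, hl, hwl, hd⟩ := exists_isLeafVx_dist_eq_heightVx h
    obtain ⟨p, hp⟩ := hwl.exists_walk_length_eq_dist
    calc heightVx G v ≤ G.dist v l := heightVx_le_dist hl (hvw.reachable.trans hwl)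
      _ ≤ (p.cons hvw).length := dist_le _
      _ = heightVx G w + 1 := by rw [Walk.length_cons, hp, hd]
  · have h' : ¬∃ l, IsLeafVx G l ∧ G.Reachable v l := fun ⟨l, hl, hvl⟩ ↦
      h ⟨l, hl, hvw.symm.reachable.trans hvl⟩
    simp [heightVx_eq_zero_of_not_exists h']

lemma odd_heightVx_iff_of_exists (c : G.Coloring Bool) (hc : ∀ l, IsLeafVx G l → c l = false)
    (hv : ∃ l, IsLeafVx G l ∧ G.Reachable v l) : Odd (heightVx G v) ↔ c v = true := by
  obtain ⟨l, hl, hvl, hd⟩ := exists_isLeafVx_dist_eq_heightVx hv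
  obtain ⟨p, hp⟩ := hvl.exists_walk_length_eq_dist
  rw [← hd, ← hp, c.odd_length_iff_not_congr, hc l hl]
  simp

lemma IsBalanced.odd_heightVx_iff_not_of_adj (hG : IsBalanced G) (hvw : G.Adj v w) :
    Odd (heightVx G v) ↔ ¬Odd (heightVx G w) := by
  have h₁ := heightVx_le_heightVx_add_one_of_adj hvw
  have h₂ := heightVx_le_heightVx_add_one_of_adj hvw.symm
  have h₃ := hG v w hvw
  obtain h | h : heightVx G v = heightVx G w + 1 ∨ heightVx G w = heightVx G v + 1 := by omega
  all_goals rw [h]; simp [Nat.odd_add_one]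

noncomputable def IsBalanced.parityColoring (hG : IsBalanced G) : G.Coloring Bool :=
  Coloring.mk (fun v ↦ decide (Odd (heightVx G v))) fun hvw ↦ by
    have := hG.odd_heightVx_iff_not_of_adj hvw
    simp only [ne_eq, decide_eq_decide]
    tauto

@[simp]
lemma IsBalanced.parityColoring_apply (hG : IsBalanced G) (v : V) :
    hG.parityColoring v = decide (Odd (heightVx G v)) :=
  rfl

lemma IsBalanced.neighborSet_subset_of_odd (hG : IsBalanced G) (hu : Even (heightVx G u))
    (hv : v ∈ (G.neighborSet u ∪ {u})ᶜ) (hodd : Odd (heightVx G v)) :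
    G.neighborSet v ⊆ (G.neighborSet u ∪ {u})ᶜ := by
  rintro w hvw (huw | rfl)
  · exact (hG.odd_heightVx_iff_not_of_adj hvw).mp hodd
      ((hG.odd_heightVx_iff_not_of_adj (G.adj_symm huw)).mpr (Nat.not_odd_iff_even.mpr hu))
  · exact hv (Or.inl (G.adj_symm hvw))

lemma IsBalanced.not_odd_of_isLeafVx_induce (hG : IsBalanced G) (hu : Even (heightVx G u))
    {l : ((G.neighborSet u ∪ {u})ᶜ : Set V)}
    (hl : IsLeafVx (G.induce (G.neighborSet u ∪ {u})ᶜ) l) :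
    ¬Odd (heightVx G l) := fun hodd ↦ by
  rw [isLeafVx_induce_iff (hG.neighborSet_subset_of_odd hu l.2 hodd)] at hl
  exact Nat.not_odd_zero (hl.heightVx_eq_zero ▸ hodd)

end Heights

/-- The component of `v` is a finite tree with an edge, so it has a leaf. -/
lemma SimpleGraph.IsAcyclic.exists_isLeafVx_reachable {V : Type} [Finite V] {G : SimpleGraph V}
    (hG : G.IsAcyclic) {v w : V} (hvw : G.Adj v w) : ∃ l, IsLeafVx G l ∧ G.Reachable v l := by
  have := Fintype.ofFinite V
  let C := G.connectedComponentMk v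
  have hT : (G.induce C.supp).IsTree := hG.isTree_connectedComponent C
  have : Nontrivial C.supp :=
    ⟨⟨v, rfl⟩, ⟨w, (ConnectedComponent.connectedComponentMk_eq_of_adj hvw).symm⟩,
      fun h ↦ hvw.ne (congrArg Subtype.val h)⟩
  obtain ⟨⟨l, hlC⟩, hl⟩ := hT.exists_vert_degree_one_of_nontrivial
  have hsub : G.neighborSet l ⊆ C.supp := fun x hlx ↦
    (ConnectedComponent.connectedComponentMk_eq_of_adj hlx).symm.trans hlC
  exact ⟨l, (isLeafVx_induce_iff hsub).mp (isLeafVx_iff_degree_eq_one.mpr hl),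
    ConnectedComponent.exact hlC.symm⟩

theorem oddVertices_delete_closed_neighborhood_general {V : Type} [Fintype V] (G : SimpleGraph V)
    (htree : G.IsTree) (hbal : IsBalanced G) (u : V) (hu : heightVx G u = 2) :
    Subtype.val ''
        {v : ((G.neighborSet u ∪ {u})ᶜ : Set V) |
          Odd (heightVx (G.induce ((G.neighborSet u ∪ {u})ᶜ)) v)}
      = {v : V | Odd (heightVx G v)} \ G.neighborSet u := by
  set S : Set V := (G.neighborSet u ∪ {u})ᶜ
  have hu_even : Even (heightVx G u) := hu ▸ even_two
  let c : (G.induce S).Coloring Bool := hbal.parityColoring.comp (Embedding.induce S).toHom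
  have hc (v : S) : c v = true ↔ Odd (heightVx G v) := by simp [c]
  have hc_leaf (l : S) (hl : IsLeafVx (G.induce S) l) : c l = false := by
    simpa [c] using hbal.not_odd_of_isLeafVx_induce hu_even hl
  ext x
  constructor
  · rintro ⟨v, hodd, rfl⟩
    have hv : ∃ l, IsLeafVx (G.induce S) l ∧ (G.induce S).Reachable v l := by
      by_contra h
      exact Nat.not_odd_zero (heightVx_eq_zero_of_not_exists h ▸ hodd)
    exact ⟨(hc v).mp ((odd_heightVx_iff_of_exists c hc_leaf hv).mp hodd),
      fun h ↦ v.2 (Or.inl h)⟩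
  · rintro ⟨hodd, hxu⟩
    have hxS : x ∈ S := by
      rintro (h | rfl)
      exacts [hxu h, Nat.not_odd_iff_even.mpr hu_even hodd]
    obtain ⟨w, hxw⟩ := (htree.connected.preconnected x u).nonempty_neighborSet_left
      (fun h ↦ hxS (Or.inr h))
    have hwS : w ∈ S := hbal.neighborSet_subset_of_odd hu_even hxS hodd hxw
    have hw : (G.induce S).Adj ⟨x, hxS⟩ ⟨w, hwS⟩ := by simpa using hxw
    refine ⟨⟨x, hxS⟩, show Odd _ from ?_, rfl⟩
    have hl := (htree.isAcyclic.induce S).exists_isLeafVx_reachable hw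
    exact (odd_heightVx_iff_of_exists c hc_leaf hl).mpr ((hc _).mpr hodd)

/-- **Corollary**: if `T` is a finite TD-unmixed balanced tree of height 3 and `u` is a
vertex of height 2, then `V_odd(T∖N[u]) = V_odd(T)∖N_T(u)`, heights on the left being
computed in the induced subgraph `T∖N[u]` and on the right in `T`. -/
theorem oddVertices_delete_closed_neighborhood {V : Type} [Fintype V] (G : SimpleGraph V)
    (htree : G.IsTree) (hbal : IsBalanced G) (hunm : TDUnmixed G)
    (hht : heightGr G = 3) (u : V) (hu : heightVx G u = 2) :
    Subtype.val ''
        {v : ((G.neighborSet u ∪ {u})ᶜ : Set V) |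
          Odd (heightVx (G.induce ((G.neighborSet u ∪ {u})ᶜ)) v)}
      = {v : V | Odd (heightVx G v)} \ G.neighborSet u :=
  oddVertices_delete_closed_neighborhood_general G htree hbal u hu
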